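/- The induced system of Ito's Farey natural extension on H_1 is isomorphic to the natural extension of the Gauss map: the map φ(x,y) = (x, (1-y)/y) conjugates the first-return map ℱ_{H_1} on H_1 = [0,1] × (1/2, 1] (given for x ≠ 0 by ℱ_{H_1}(x,y) = ℱ^{a(x)}(x,y) with a(x) = ⌊1/x⌋) to the map 𝒢(x,y) = (G(x), 1/(a(x)+y)) on [0,1]^2, and pushes forward the normalized restriction of the measure with density 1/(x+y-xy)^2 on H_1 to the measure with density 1/(log 2 (1+xy)^2) on [0,1]^2. -/

import Mathlib

open MeasureTheory

noncomputable section

/-- Ito's natural extension map of the Farey tent map on `Ω = [0,1]²`. -/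
def Fbar (p : ℝ × ℝ) : ℝ × ℝ :=
  if p.1 ≤ 1 / 2 then (p.1 / (1 - p.1), p.2 / (1 + p.2))
  else ((1 - p.1) / p.1, 1 / (1 + p.2))

/-- The conjugating map `φ(x,y) = (x, (1-y)/y)`. -/
def phi (p : ℝ × ℝ) : ℝ × ℝ := (p.1, (1 - p.2) / p.2)

/-- The natural extension of the Gauss map, `𝒢(x,y) = (G x, 1/(⌊1/x⌋ + y))`. -/
def Gmap (p : ℝ × ℝ) : ℝ × ℝ :=
  if p.1 = 0 then p
  else (1 / p.1 - ⌊1 / p.1⌋, 1 / ((⌊1 / p.1⌋ : ℝ) + p.2))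

/-! On `x ≤ 1/2` the map `ℱ` acts by the Möbius maps `x ↦ x/(1-x)`, `y ↦ y/(1+y)`, whose
`k`-th iterates are `x ↦ x/(1-kx)`, `y ↦ y/(1+ky)`. Starting from `x ∈ (1/(a+1), 1/a)` the orbit
stays in the left branch for `a - 1` steps and takes the right branch at step `a`, which produces
`(1/x - a, (1+(a-1)y)/(1+ay))`; applying `φ` gives exactly `𝒢(φ(x,y))`. For the measures, `φ` is
injective on `H_1` with Jacobian `-1/y²`, maps `H_1` onto `[0,1] × [0,1)`, and
`1/(x+y-xy)² = y⁻² · 1/(1 + x(1-y)/y)²`, so the change of variables formula applies. -/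

open Set

theorem Fbar_of_le_half {p : ℝ × ℝ} (hp : p.1 ≤ 1 / 2) :
    Fbar p = (p.1 / (1 - p.1), p.2 / (1 + p.2)) :=
  if_pos hp

theorem Fbar_of_half_lt {p : ℝ × ℝ} (hp : 1 / 2 < p.1) :
    Fbar p = ((1 - p.1) / p.1, 1 / (1 + p.2)) :=
  if_neg hp.not_ge

theorem Fbar_iterate_of_succ_mul_lt {x y : ℝ} (hx : 0 < x) (hy : 0 ≤ y) {k : ℕ}
    (hk : (k + 1) * x < 1) : Fbar^[k] (x, y) = (x / (1 - k * x), y / (1 + k * y)) := by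
  induction k with
  | zero => simp
  | succ k ih =>
    push_cast at hk ⊢
    have hkx : 0 < 1 - (k + 1) * x := by linarith
    have hkx' : 0 < 1 - k * x := by linarith
    have hle : x / (1 - k * x) ≤ 1 / 2 := by
      rw [div_le_div_iff₀ hkx' two_pos]
      linarith
    have hky : 1 + k * y ≠ 0 := by positivity
    rw [Function.iterate_succ_apply', ih (by linarith), Fbar_of_le_half hle, one_sub_div hkx'.ne',
      one_add_div hky, div_div_div_cancel_right₀ hkx'.ne', div_div_div_cancel_right₀ hky]
    ext <;> dsimp only <;> ring

theorem Fbar_iterate_succ_of_lt_of_lt {x y : ℝ} (hy : 0 ≤ y) {m : ℕ}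
    (h₁ : (m + 1) * x < 1) (h₂ : 1 < (m + 2) * x) :
    Fbar^[m + 1] (x, y) = ((1 - (m + 1) * x) / x, (1 + m * y) / (1 + (m + 1) * y)) := by
  have hx : 0 < x := by nlinarith
  have hmx : 0 < 1 - m * x := by linarith
  have hlt : 1 / 2 < x / (1 - m * x) := by
    rw [div_lt_div_iff₀ two_pos hmx]
    linarith
  have hmy : 1 + m * y ≠ 0 := by positivity
  rw [Function.iterate_succ_apply', Fbar_iterate_of_succ_mul_lt hx hy h₁, Fbar_of_half_lt hlt,
    one_sub_div hmx.ne', one_add_div hmy, div_div_div_cancel_right₀ hmx.ne', one_div_div]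
  ext <;> dsimp only <;> ring

theorem phi_Fbar_iterate_floor_eq_Gmap_phi {x y : ℝ} (hirr : Irrational x) (hx₀ : 0 < x)
    (hx₁ : x < 1) (hy : 0 < y) :
    phi (Fbar^[(⌊1 / x⌋).toNat] (x, y)) = Gmap (phi (x, y)) := by
  obtain ⟨m, hm⟩ : ∃ m : ℕ, ⌊1 / x⌋ = m + 1 := by
    have : 1 ≤ ⌊1 / x⌋ := Int.le_floor.2 (by push_cast; rw [le_div_iff₀ hx₀]; linarith)
    exact ⟨(⌊1 / x⌋ - 1).toNat, by omega⟩
  have hfl : ((m : ℝ) + 1) ≤ 1 / x ∧ 1 / x < (m : ℝ) + 1 + 1 := by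
    exact_mod_cast Int.floor_eq_iff.1 hm
  have hne : ((m : ℝ) + 1) ≠ 1 / x := by
    simpa [eq_comm] using hirr.inv.ne_int (m + 1)
  have h₁ : (m + 1) * x < 1 := (lt_div_iff₀ hx₀).1 (hfl.1.lt_of_ne hne)
  have h₂ : 1 < (m + 2) * x := by
    rw [← div_lt_iff₀ hx₀]
    linarith [hfl.2]
  rw [hm, show ((m : ℤ) + 1).toNat = m + 1 by omega, Fbar_iterate_succ_of_lt_of_lt hy.le h₁ h₂]
  simp only [phi, Gmap, hx₀.ne', if_false, hm]
  push_cast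
  ext
  · field_simp
  · have hm₁y : 1 + (m + 1) * y ≠ 0 := by positivity
    dsimp only
    rw [one_sub_div hm₁y, div_div_div_cancel_right₀ hm₁y, add_div' _ _ _ hy.ne', one_div_div,
      show (m + 1) * y + (1 - y) = 1 + m * y by ring]
    ring

theorem MeasureTheory.Measure.map_withDensity_comp {α β : Type*} [MeasurableSpace α]
    [MeasurableSpace β] (ν : Measure α) {f : α → β} (hf : Measurable f) {g : β → ENNReal}
    (hg : Measurable g) :
    Measure.map f (ν.withDensity (g ∘ f)) = (Measure.map f ν).withDensity g := by
  ext t ht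
  rw [Measure.map_apply hf ht, withDensity_apply _ (hf ht), withDensity_apply _ ht,
    setLIntegral_map ht hg hf, Function.comp_def]

theorem map_withDensity_abs_det_fderiv_mul_comp {E : Type*} [NormedAddCommGroup E]
    [NormedSpace ℝ E] [FiniteDimensional ℝ E] [MeasurableSpace E] [BorelSpace E]
    (μ : Measure E) [μ.IsAddHaarMeasure] {s : Set E} {f : E → E} {f' : E → E →L[ℝ] E}
    {g : E → ENNReal} (hs : MeasurableSet s) (hf : Measurable f)
    (hf' : ∀ x ∈ s, HasFDerivWithinAt f (f' x) s x) (hinj : InjOn f s) (hg : Measurable g) :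
    Measure.map f ((μ.restrict s).withDensity fun x => ENNReal.ofReal |(f' x).det| * g (f x)) =
      (μ.restrict (f '' s)).withDensity g := by
  rw [← map_withDensity_abs_det_fderiv_eq_addHaar μ hs.nullMeasurableSet hf' hinj,
    ← Measure.map_withDensity_comp _ hf hg, ← withDensity_mul₀
      (aemeasurable_ofReal_abs_det_fderivWithin μ hs hf') (hg.comp hf).aemeasurable]
  rfl

def phiDeriv (p : ℝ × ℝ) : ℝ × ℝ →L[ℝ] ℝ × ℝ :=
  (ContinuousLinearMap.id ℝ ℝ).prodMap (ContinuousLinearMap.toSpanSingleton ℝ (-(p.2 ^ 2)⁻¹))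

theorem hasFDerivAt_phi {p : ℝ × ℝ} (hp : p.2 ≠ 0) : HasFDerivAt phi (phiDeriv p) p := by
  have hψ : HasDerivAt (fun y : ℝ => (1 - y) / y) (-(p.2 ^ 2)⁻¹) p.2 := by
    refine (((hasDerivAt_id' p.2).const_sub 1).div (hasDerivAt_id' p.2) hp).congr_deriv ?_
    field_simp
    ring
  exact (hasFDerivAt_id p.1).prodMap p hψ.hasFDerivAt

theorem det_phiDeriv (p : ℝ × ℝ) : (phiDeriv p).det = -(p.2 ^ 2)⁻¹ := by
  rw [phiDeriv, ContinuousLinearMap.det, ContinuousLinearMap.coe_prodMap, LinearMap.det_prodMap,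
    ContinuousLinearMap.coe_id, LinearMap.det_id, one_mul, ← ContinuousLinearMap.det,
    ContinuousLinearMap.det_toSpanSingleton]

theorem measurable_phi : Measurable phi :=
  measurable_fst.prodMk ((measurable_const.sub measurable_snd).div measurable_snd)

theorem phi_injOn : InjOn phi {p | p.2 ≠ 0} := by
  rintro ⟨u, v⟩ hv ⟨u', v'⟩ hv' h
  simp only [phi, Prod.mk.injEq, mem_ofPred_eq] at h hv hv' ⊢
  refine ⟨h.1, ?_⟩
  rw [div_eq_div_iff hv hv'] at h
  linarith [h.2]

theorem phi_image_prod (A B : Set ℝ) : phi '' (A ×ˢ B) = A ×ˢ ((fun y => (1 - y) / y) '' B) := by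
  rw [← image_id A, ← prodMap_image_prod, image_id]
  rfl

theorem image_Ioc_half_one : (fun y : ℝ => (1 - y) / y) '' Ioc (1 / 2) 1 = Ico 0 1 := by
  ext u
  constructor
  · rintro ⟨y, ⟨hy1, hy2⟩, rfl⟩
    have hy : 0 < y := by linarith
    exact ⟨div_nonneg (by linarith) hy.le, by rw [div_lt_one hy]; linarith⟩
  · rintro ⟨hu0, hu1⟩
    refine ⟨1 / (1 + u), ⟨?_, ?_⟩, ?_⟩
    · rw [div_lt_div_iff₀ (by norm_num) (by linarith)]; linarith
    · rw [div_le_one (by linarith)]; linarith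
    · field_simp; ring

def fareyDensity (p : ℝ × ℝ) : ENNReal :=
  ENNReal.ofReal (1 / (Real.log 2 * (p.1 + p.2 - p.1 * p.2) ^ 2))

def gaussDensity (p : ℝ × ℝ) : ENNReal :=
  ENNReal.ofReal (1 / (Real.log 2 * (1 + p.1 * p.2) ^ 2))

theorem measurable_gaussDensity : Measurable gaussDensity := by
  unfold gaussDensity
  fun_prop

theorem fareyDensity_eq_abs_det_mul_gaussDensity {p : ℝ × ℝ} (hp : p.2 ≠ 0) :
    fareyDensity p = ENNReal.ofReal |(phiDeriv p).det| * gaussDensity (phi p) := by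
  rw [det_phiDeriv, fareyDensity, gaussDensity, ← ENNReal.ofReal_mul (abs_nonneg _), abs_neg,
    abs_of_nonneg (by positivity)]
  congr 1
  simp only [phi]
  field_simp
  ring

theorem map_phi_withDensity_fareyDensity :
    Measure.map phi ((volume.restrict (Icc (0 : ℝ) 1 ×ˢ Ioc (1 / 2 : ℝ) 1)).withDensity
      fareyDensity) =
      (volume.restrict (Icc (0 : ℝ) 1 ×ˢ Icc (0 : ℝ) 1)).withDensity gaussDensity := by
  set s : Set (ℝ × ℝ) := Icc 0 1 ×ˢ Ioc (1 / 2) 1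
  have hs : MeasurableSet s := measurableSet_Icc.prod measurableSet_Ioc
  have hs₂ : ∀ p ∈ s, p.2 ≠ 0 := fun p hp => (lt_trans one_half_pos hp.2.1).ne'
  calc Measure.map phi ((volume.restrict s).withDensity fareyDensity)
      = Measure.map phi ((volume.restrict s).withDensity
          fun p => ENNReal.ofReal |(phiDeriv p).det| * gaussDensity (phi p)) := by
        rw [withDensity_congr_ae (ae_restrict_of_forall_mem hs
          fun p hp => fareyDensity_eq_abs_det_mul_gaussDensity (hs₂ p hp))]
    _ = (volume.restrict (phi '' s)).withDensity gaussDensity :=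
        map_withDensity_abs_det_fderiv_mul_comp volume hs measurable_phi
          (fun p hp => (hasFDerivAt_phi (hs₂ p hp)).hasFDerivWithinAt)
          (phi_injOn.mono hs₂) measurable_gaussDensity
    _ = (volume.restrict (Icc (0 : ℝ) 1 ×ˢ Icc (0 : ℝ) 1)).withDensity gaussDensity := by
        rw [phi_image_prod, image_Ioc_half_one, Measure.restrict_congr_set
          (Measure.volume_eq_prod ℝ ℝ ▸ Measure.set_prod_ae_eq (ae_eq_refl _) Ico_ae_eq_Icc)]

/-- Brown–Yin: the induced (first-return) system of Ito's Farey natural extension on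
`H_1 = [0,1] × (1/2,1]` is isomorphic to the natural extension of the Gauss map.  The map
`φ(x,y) = (x, (1-y)/y)` conjugates the first-return map `ℱ_{H_1}(x,y) = ℱ^{a(x)}(x,y)`
(`a(x) = ⌊1/x⌋`) to `𝒢`, and pushes forward the normalized restriction to `H_1` of the
measure with density `1/(x+y-xy)²` (total mass `log 2` on `H_1`) to the measure with density
`1/(log 2 (1+xy)²)` on `[0,1]²`. -/
theorem stmt17 :
    (∀ x y : ℝ, Irrational x → 0 < x → x < 1 → 1 / 2 < y → y ≤ 1 →
      phi (Fbar^[(⌊1 / x⌋).toNat] (x, y)) = Gmap (phi (x, y))) ∧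
    Measure.map phi
        ((volume.restrict (Set.Icc (0 : ℝ) 1 ×ˢ Set.Ioc (1 / 2 : ℝ) 1)).withDensity
          fun p => ENNReal.ofReal (1 / (Real.log 2 * (p.1 + p.2 - p.1 * p.2) ^ 2))) =
      (volume.restrict (Set.Icc (0 : ℝ) 1 ×ˢ Set.Icc (0 : ℝ) 1)).withDensity
        (fun p => ENNReal.ofReal (1 / (Real.log 2 * (1 + p.1 * p.2) ^ 2))) := by
  refine ⟨fun x y hirr hx₀ hx₁ hy _ => phi_Fbar_iterate_floor_eq_Gmap_phi hirr hx₀ hx₁ ?_,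
    map_phi_withDensity_fareyDensity⟩
  linarith

end
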